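/- Negative weights can reverse signs: there exist random variables (D(0), D(1)) and a family of continuously differentiable functions Y_i with Y_i'(v) > 0 everywhere, such that 𝔼[D(1) - D(0)] > 0 but 𝔼[Y(D(1)) - Y(D(0))] / 𝔼[D(1) - D(0)] < 0. -/

import Mathlib

open MeasureTheory ProbabilityTheory

/-- Negative weights can reverse signs: there is a population where each individual outcome
function has strictly positive derivative everywhere, the average first stage
`𝔼[D(1) - D(0)]` is positive, yet the Wald estimand is negative. -/
theorem stmt15 : ∃ (Ω : Type) (_ : MeasurableSpace Ω) (P : Measure Ω)
    (_ : IsProbabilityMeasure P) (D0 D1 : Ω → ℝ) (Yf : Ω → ℝ → ℝ),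
    (∀ ω, ContDiff ℝ 1 (Yf ω)) ∧ (∀ ω v, 0 < deriv (Yf ω) v) ∧
    Integrable (fun ω => D1 ω - D0 ω) P ∧
    Integrable (fun ω => Yf ω (D1 ω) - Yf ω (D0 ω)) P ∧
    0 < ∫ ω, (D1 ω - D0 ω) ∂P ∧
    (∫ ω, (Yf ω (D1 ω) - Yf ω (D0 ω)) ∂P) / (∫ ω, (D1 ω - D0 ω) ∂P) < 0 := by
  -- Type `true` (mass 1/2) is a defier: D moves by -1 at slope 10; type `false` moves D by +2
  -- at slope 1. Hence 𝔼[ΔD] = 1/2 > 0 while 𝔼[ΔY] = (-10 + 2) / 2 = -4.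
  let slope : Bool → ℝ := fun b => bif b then 10 else 1
  have slope_pos (b : Bool) : 0 < slope b := by cases b <;> norm_num [slope]
  refine ⟨Bool, inferInstance, Ber(true, false, ⟨1 / 2, by norm_num, by norm_num⟩), inferInstance,
    fun _ => 0, fun b => bif b then -1 else 2, fun b v => slope b * v,
    fun _ => contDiff_const.mul contDiff_id, fun b v => by simpa using slope_pos b,
    integrable_bernoulliMeasure .., integrable_bernoulliMeasure .., ?_, ?_⟩
  · rw [integral_bernoulliMeasure]; norm_num
  · rw [integral_bernoulliMeasure, integral_bernoulliMeasure]; norm_num [slope]
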